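/- Let h be convex, f be L-smooth, Ψ = f + h bounded below by Ψ*. Consider the exact proximal gradient iteration x_{k+1} = prox_{η h}(x_k - η ∇f(x_k)) with constant step η ∈ (0, 1/L]. Then for every K ≥ 1, min_{1 ≤ k ≤ K} ‖P(x_k, ∇f(x_k), η)‖² ≤ 2(Ψ(x₁) - Ψ*)/(K η (2 - Lη)). -/

import Mathlib

open Set

lemma descent_lemma {d : ℕ} (f : EuclideanSpace ℝ (Fin d) → ℝ)
    (f' : EuclideanSpace ℝ (Fin d) → EuclideanSpace ℝ (Fin d))
    (hf : ∀ x, HasGradientAt f (f' x) x) (L : ℝ)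
    (hLip : ∀ a b, ‖f' a - f' b‖ ≤ L * ‖a - b‖)
    (x y : EuclideanSpace ℝ (Fin d)) :
    f y ≤ f x + inner ℝ (f' x) (y - x) + L / 2 * ‖y - x‖ ^ 2 := by
  set v := y - x with hv
  have hline : ∀ t : ℝ, HasDerivAt (fun t : ℝ => x + t • v) v t := by
    intro t
    simpa using ((hasDerivAt_id t).smul_const v).const_add x
  have hF : ∀ t : ℝ, HasDerivAt (fun t : ℝ => f (x + t • v))
      (inner ℝ (f' (x + t • v)) v : ℝ) t := by
    intro t
    have := (hasGradientAt_iff_hasFDerivAt.mp (hf (x + t • v))).comp_hasDerivAt t (hline t)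
    simp only [InnerProductSpace.toDual_apply_apply] at this
    exact this
  have hB : ∀ t : ℝ, HasDerivAt
      (fun t : ℝ => f x + t * inner ℝ (f' x) v + L / 2 * t ^ 2 * ‖v‖ ^ 2)
      ((inner ℝ (f' x) v : ℝ) + L * t * ‖v‖ ^ 2) t := by
    intro t
    have h1 : HasDerivAt (fun t : ℝ => t * (inner ℝ (f' x) v : ℝ)) (inner ℝ (f' x) v : ℝ) t := by
      simpa using (hasDerivAt_id t).mul_const (inner ℝ (f' x) v : ℝ)
    have h2 : HasDerivAt (fun t : ℝ => L / 2 * t ^ 2 * ‖v‖ ^ 2) (L * t * ‖v‖ ^ 2) t := by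
      have := ((hasDerivAt_pow 2 t).const_mul (L / 2)).mul_const (‖v‖ ^ 2)
      exact this.congr_deriv (by rw [show (2:ℕ) - 1 = 1 from rfl]; push_cast; ring)
    exact ((h1.const_add (f x)).add h2)
  have key : ∀ z ∈ Icc (0:ℝ) 1, f (x + z • v) ≤
      f x + z * inner ℝ (f' x) v + L / 2 * z ^ 2 * ‖v‖ ^ 2 := by
    apply image_le_of_deriv_right_le_deriv_boundary
    · exact fun t _ => (hF t).continuousAt.continuousWithinAt
    · exact fun t _ => (hF t).hasDerivWithinAt
    · simp
    · exact fun t _ => (hB t).continuousAt.continuousWithinAt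
    · exact fun t _ => (hB t).hasDerivWithinAt
    · intro t ht
      have h1 : (inner ℝ (f' (x + t • v)) v : ℝ) - inner ℝ (f' x) v
          = inner ℝ (f' (x + t • v) - f' x) v := by
        rw [inner_sub_left]
      have h2 : (inner ℝ (f' (x + t • v) - f' x) v : ℝ) ≤ ‖f' (x + t • v) - f' x‖ * ‖v‖ :=
        real_inner_le_norm _ _
      have h3 : ‖f' (x + t • v) - f' x‖ ≤ L * ‖t • v‖ := by
        simpa using hLip (x + t • v) x
      have h4 : ‖t • v‖ = t * ‖v‖ := by
        rw [norm_smul, Real.norm_eq_abs, abs_of_nonneg ht.1]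
      rw [h4] at h3
      nlinarith [norm_nonneg v, mul_le_mul_of_nonneg_right h3 (norm_nonneg v)]
  have := key 1 (by norm_num)
  simpa [hv] using this
lemma prox_strong {d : ℕ} (h : EuclideanSpace ℝ (Fin d) → ℝ)
    (hconv : ConvexOn ℝ Set.univ h) (η : ℝ) (hη : 0 < η)
    (u p : EuclideanSpace ℝ (Fin d))
    (hmin : ∀ w, h p + (1 / (2 * η)) * ‖p - u‖ ^ 2 ≤
      h w + (1 / (2 * η)) * ‖w - u‖ ^ 2)
    (w : EuclideanSpace ℝ (Fin d)) :
    h p + (1 / (2 * η)) * ‖p - u‖ ^ 2 + (1 / (2 * η)) * ‖w - p‖ ^ 2 ≤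
      h w + (1 / (2 * η)) * ‖w - u‖ ^ 2 := by
  set s : ℝ := (1 / (2 * η)) * ‖w - p‖ ^ 2 with hs
  have hs0 : 0 ≤ s := by positivity
  have key : ∀ t : ℝ, 0 < t → t ≤ 1 →
      h p + (1 / (2 * η)) * ‖p - u‖ ^ 2 + (1 - t) * s ≤
        h w + (1 / (2 * η)) * ‖w - u‖ ^ 2 := by
    intro t ht ht1
    have hwt := hmin (p + t • (w - p))
    have hconvh : h (p + t • (w - p)) ≤ (1 - t) * h p + t * h w := by
      have := hconv.2 (Set.mem_univ p) (Set.mem_univ w)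
        (by linarith : (0:ℝ) ≤ 1 - t) (le_of_lt ht) (by ring)
      have he : p + t • (w - p) = (1 - t) • p + t • w := by
        module
      rw [he]
      simpa using this
    have he2 : p + t • (w - p) - u = (p - u) + t • (w - p) := by abel
    have hq : ‖p + t • (w - p) - u‖ ^ 2 =
        ‖p - u‖ ^ 2 + 2 * (t * inner ℝ (p - u) (w - p)) + t ^ 2 * ‖w - p‖ ^ 2 := by
      rw [he2, norm_add_sq_real, real_inner_smul_right, norm_smul,
        Real.norm_eq_abs, abs_of_pos ht, mul_pow]
    have hw2 : ‖w - u‖ ^ 2 = ‖p - u‖ ^ 2 + 2 * inner ℝ (p - u) (w - p) + ‖w - p‖ ^ 2 := by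
      have : w - u = (p - u) + (w - p) := by abel
      rw [this, norm_add_sq_real]
    rw [hq] at hwt
    have hdiv : h p ≤ h w + (1 / (2 * η)) *
        (2 * inner ℝ (p - u) (w - p) + t * ‖w - p‖ ^ 2) := by
      have h' : t * h p ≤ t * (h w + (1 / (2 * η)) *
          (2 * (inner ℝ (p - u) (w - p) : ℝ) + t * ‖w - p‖ ^ 2)) := by
        have hη' : 0 < 1 / (2 * η) := by positivity
        nlinarith [hwt, hconvh]
      exact le_of_mul_le_mul_left h' ht
    have hexp : (1 / (2 * η)) * ‖w - u‖ ^ 2 =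
        (1 / (2 * η)) * ‖p - u‖ ^ 2 + (1 / (2 * η)) * (2 * inner ℝ (p - u) (w - p))
          + s := by
      rw [hw2, hs]; ring
    rw [hs] at *
    nlinarith [hdiv]
  by_contra hcon
  push_neg at hcon
  set D : ℝ := h w + (1 / (2 * η)) * ‖w - u‖ ^ 2
      - (h p + (1 / (2 * η)) * ‖p - u‖ ^ 2) with hD
  have hD0 : 0 ≤ D := by have := hmin w; rw [hD]; linarith
  have hsD : D < s := by rw [hD]; linarith
  have hspos : 0 < s := lt_of_le_of_lt hD0 hsD
  have hkey := key ((s - D) / (2 * s)) (div_pos (by linarith) (by positivity))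
    (by rw [div_le_one (by positivity)]; linarith)
  have hts : (s - D) / (2 * s) * s = (s - D) / 2 := by
    field_simp
  nlinarith [hkey]

theorem stmt10 (d : ℕ) (f h : EuclideanSpace ℝ (Fin d) → ℝ)
    (f' : EuclideanSpace ℝ (Fin d) → EuclideanSpace ℝ (Fin d))
    (hf : ∀ x, HasGradientAt f (f' x) x) (L : ℝ) (hL : 0 < L)
    (hLip : ∀ a b, ‖f' a - f' b‖ ≤ L * ‖a - b‖)
    (hconv : ConvexOn ℝ Set.univ h)
    (Ψstar : ℝ) (hbdd : ∀ z, Ψstar ≤ f z + h z)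
    (η : ℝ) (hη : 0 < η) (hηL : η ≤ 1 / L)
    (x : ℕ → EuclideanSpace ℝ (Fin d))
    (hiter : ∀ k, ∀ w, h (x (k + 1)) +
        (1 / (2 * η)) * ‖x (k + 1) - (x k - η • f' (x k))‖ ^ 2 ≤
      h w + (1 / (2 * η)) * ‖w - (x k - η • f' (x k))‖ ^ 2)
    (K : ℕ) (hK : 1 ≤ K) :
    (Finset.Icc 1 K).inf' (by simp [hK])
        (fun k => ‖η⁻¹ • (x k - x (k + 1))‖ ^ 2)
      ≤ 2 * ((f (x 1) + h (x 1)) - Ψstar) / (K * η * (2 - L * η)) := by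
  have hLη : L * η ≤ 1 := by
    rw [le_div_iff₀ hL] at hηL; linarith [hηL]
  set c : ℝ := (2 - L * η) / (2 * η) with hc
  have hcpos : 0 < c := by
    apply div_pos <;> linarith
  -- sufficient decrease
  have hdec : ∀ k : ℕ, f (x (k+1)) + h (x (k+1)) + c * ‖x (k+1) - x k‖ ^ 2
      ≤ f (x k) + h (x k) := by
    intro k
    set g := f' (x k)
    set Δ := x (k+1) - x k with hΔ
    have h1 := prox_strong h hconv η hη (x k - η • g) (x (k+1)) (hiter k) (x k)
    have e1 : x (k+1) - (x k - η • g) = Δ + η • g := by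
      rw [hΔ]; abel
    have e2 : x k - (x k - η • g) = η • g := by abel
    have e4 : x k - x (k+1) = -Δ := by rw [hΔ]; abel
    rw [e1, e2, e4, norm_neg] at h1
    have e3 : ‖Δ + η • g‖ ^ 2 = ‖Δ‖ ^ 2 + 2 * (η * inner ℝ Δ g) + ‖η • g‖ ^ 2 := by
      rw [norm_add_sq_real, real_inner_smul_right]
    rw [e3] at h1
    have hstep : h (x (k+1)) + (1 / η) * ‖Δ‖ ^ 2 + inner ℝ Δ g ≤ h (x k) := by
      have h3 : (1 / (2*η)) * (‖Δ‖ ^ 2 + 2 * (η * (inner ℝ Δ g : ℝ)) + ‖η • g‖ ^ 2)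
          = (1/(2*η)) * ‖Δ‖ ^ 2 + inner ℝ Δ g + (1/(2*η)) * ‖η • g‖ ^ 2 := by
        field_simp
      rw [h3] at h1
      have h4 : (1/(2*η)) * ‖Δ‖ ^ 2 + (1/(2*η)) * ‖Δ‖ ^ 2 = (1/η) * ‖Δ‖ ^ 2 := by
        field_simp; ring
      linarith
    have hdesc := descent_lemma f f' hf L hLip (x k) (x (k+1))
    rw [← hΔ] at hdesc
    have hcomm : (inner ℝ g Δ : ℝ) = inner ℝ Δ g := real_inner_comm _ _
    rw [hcomm] at hdesc
    have hce : c * ‖Δ‖ ^ 2 = (1/η) * ‖Δ‖ ^ 2 - L / 2 * ‖Δ‖ ^ 2 := by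
      rw [hc]; field_simp
    rw [hΔ] at *
    nlinarith [hstep, hdesc]
  -- telescoping
  have htel : ∀ n : ℕ, (∑ k ∈ Finset.Icc 1 n, c * ‖x (k+1) - x k‖ ^ 2)
      + (f (x (n+1)) + h (x (n+1))) ≤ f (x 1) + h (x 1) := by
    intro n
    induction n with
    | zero => simp
    | succ n ih =>
      rw [Finset.sum_Icc_succ_top (by omega : 1 ≤ n + 1)]
      have := hdec (n+1)
      linarith
  have hsum : (∑ k ∈ Finset.Icc 1 K, c * ‖x (k+1) - x k‖ ^ 2)
      ≤ f (x 1) + h (x 1) - Ψstar := by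
    have := htel K
    have := hbdd (x (K+1))
    linarith
  set m := (Finset.Icc 1 K).inf' (by simp [hK])
      (fun k => ‖η⁻¹ • (x k - x (k + 1))‖ ^ 2) with hm
  have hmle : ∀ k ∈ Finset.Icc 1 K, c * η ^ 2 * m ≤ c * ‖x (k+1) - x k‖ ^ 2 := by
    intro k hk
    have h1 : m ≤ ‖η⁻¹ • (x k - x (k + 1))‖ ^ 2 := Finset.inf'_le _ hk
    have h2 : ‖η⁻¹ • (x k - x (k + 1))‖ ^ 2 = η⁻¹ ^ 2 * ‖x (k+1) - x k‖ ^ 2 := by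
      rw [norm_smul, Real.norm_eq_abs, abs_of_pos (inv_pos.mpr hη), mul_pow,
        ← norm_neg (x k - x (k+1))]
      congr 2
      abel
    rw [h2] at h1
    have h3 := mul_le_mul_of_nonneg_left h1 (le_of_lt (mul_pos hcpos (pow_pos hη 2)))
    calc c * η ^ 2 * m ≤ c * η ^ 2 * (η⁻¹ ^ 2 * ‖x (k+1) - x k‖ ^ 2) := h3
      _ = c * ‖x (k+1) - x k‖ ^ 2 := by
          field_simp
  have hcard : (Finset.Icc 1 K).card = K := by simp
  have hKsum : (K : ℝ) * (c * η ^ 2 * m) ≤ f (x 1) + h (x 1) - Ψstar := by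
    calc (K : ℝ) * (c * η ^ 2 * m)
        = ∑ _k ∈ Finset.Icc 1 K, c * η ^ 2 * m := by
          rw [Finset.sum_const, hcard, nsmul_eq_mul]
      _ ≤ ∑ k ∈ Finset.Icc 1 K, c * ‖x (k+1) - x k‖ ^ 2 := Finset.sum_le_sum hmle
      _ ≤ _ := hsum
  have hKpos : (0:ℝ) < K := by exact_mod_cast hK
  have hD : (0:ℝ) < (K:ℝ) * η * (2 - L * η) :=
    mul_pos (mul_pos hKpos hη) (by linarith)
  rw [le_div_iff₀ hD]
  have hceta : c * η ^ 2 = η * (2 - L * η) / 2 := by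
    rw [hc]; field_simp
  calc m * ((K:ℝ) * η * (2 - L * η)) = 2 * ((K:ℝ) * (c * η ^ 2 * m)) := by
        rw [hceta]; ring
    _ ≤ 2 * (f (x 1) + h (x 1) - Ψstar) := by linarith
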